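/- arXiv:2110.08397 — 7 statements merged into one kernel-verified Lean document; each statement's English description precedes it below -/
import Mathlib

section
/- Let p ≥ 5 be a prime, let x ∈ ℤ_p with digit sequence a : ℕ → ℕ (so a i ≤ p − 1 and x = Σ a i · p^i), and let ℓ ∈ ℤ with (ℓ : ℤ_p) ≠ x. For k ≥ 1 set ℓ_k := ℓ − Σ_{i=0}^{k−1} (a i) · p^i ∈ ℤ. Then for every K > 0 there exist k > K and integers s, n with p ∤ s, 0 ≤ n < k, and ℓ_k = s · p^n. -/
/-!
The truncations `ℓ_k` converge in `ℤ_[p]` to `ℓ - x ≠ 0`. In an ultrametric space the norm of a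
sequence converging to a nonzero limit is eventually constant, so `‖ℓ_k‖ = ‖ℓ - x‖` for large `k`,
while `‖p ^ k‖ → 0`. Hence eventually `p ^ k ∤ ℓ_k`, i.e. the valuation of `ℓ_k` is less than `k`.
-/

/-- A digit sequence for `x ∈ ℤ_[p]`: a function `a : ℕ → ℕ` with `a i ≤ p - 1`
for all `i`, such that `x = Σ_{i=0}^∞ (a i) · p^i` (the series converging in `ℤ_[p]`). -/
def IsDigitSequence (p : ℕ) [Fact p.Prime] (a : ℕ → ℕ) (x : ℤ_[p]) : Prop :=
  (∀ i, a i ≤ p - 1) ∧ HasSum (fun i : ℕ => (a i : ℤ_[p]) * (p : ℤ_[p]) ^ i) x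

open Filter Topology

theorem exists_eq_mul_pow_of_not_pow_dvd {α : Type*} [CommMonoid α] {a b : α} {k : ℕ}
    (h : ¬a ^ k ∣ b) : ∃ s : α, ∃ n : ℕ, ¬a ∣ s ∧ n < k ∧ b = s * a ^ n := by
  have hfin : FiniteMultiplicity a b := ⟨k, fun hk ↦ h ((pow_dvd_pow a k.le_succ).trans hk)⟩
  obtain ⟨s, hb, hs⟩ := hfin.exists_eq_pow_mul_and_not_dvd
  exact ⟨s, multiplicity a b, hs, hfin.multiplicity_lt_iff_not_dvd.2 h, hb.trans (mul_comm _ _)⟩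

theorem IsUltrametricDist.eventually_norm_eq_of_tendsto {ι E : Type*} [SeminormedAddCommGroup E]
    [IsUltrametricDist E] {l : Filter ι} {f : ι → E} {y : E} (hf : Tendsto f l (𝓝 y))
    (hy : ‖y‖ ≠ 0) : ∀ᶠ i in l, ‖f i‖ = ‖y‖ := by
  filter_upwards [Metric.tendsto_nhds.1 hf ‖y‖ ((norm_nonneg y).lt_of_ne' hy)] with i hi
  rw [dist_eq_norm_sub] at hi
  simpa [max_eq_right hi.le] using norm_add_eq_max_of_norm_ne_norm hi.ne

namespace PadicInt

variable {p : ℕ} [Fact p.Prime]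

theorem intCast_pow_dvd_iff_norm_le {m : ℤ} {k : ℕ} :
    (p : ℤ) ^ k ∣ m ↔ ‖(m : ℤ_[p])‖ ≤ ‖(p : ℤ_[p]) ^ k‖ := by
  rw [norm_p_pow, norm_int_le_pow_iff_dvd]

theorem eventually_not_pow_dvd_of_tendsto {m : ℕ → ℤ} {y : ℤ_[p]}
    (hm : Tendsto (fun k ↦ (m k : ℤ_[p])) atTop (𝓝 y)) (hy : y ≠ 0) :
    ∀ᶠ k in atTop, ¬(p : ℤ) ^ k ∣ m k := by
  have hpow : Tendsto (fun k : ℕ ↦ ‖(p : ℤ_[p]) ^ k‖) atTop (𝓝 0) := by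
    simpa using (tendsto_pow_atTop_nhds_zero_of_norm_lt_one
      ((norm_p.trans (Padic.norm_p (p := p)).symm).trans_lt Padic.norm_p_lt_one)).norm
  filter_upwards [IsUltrametricDist.eventually_norm_eq_of_tendsto hm (norm_ne_zero_iff.2 hy),
    hpow.eventually_lt_const (norm_pos_iff.2 hy)] with k hnorm hlt
  rw [intCast_pow_dvd_iff_norm_le, hnorm, not_le]
  exact hlt

end PadicInt

theorem truncation_valuation_lt_general (p : ℕ) [Fact p.Prime]
    (x : ℤ_[p]) (a : ℕ → ℕ) (ha : IsDigitSequence p a x)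
    (ℓ : ℤ) (hℓ : (ℓ : ℤ_[p]) ≠ x) :
    ∀ K : ℕ, 0 < K → ∃ k : ℕ, K < k ∧ ∃ s : ℤ, ∃ n : ℕ, ¬ ((p : ℤ) ∣ s) ∧ n < k ∧
      ℓ - ∑ i ∈ Finset.range k, (a i : ℤ) * (p : ℤ) ^ i = s * (p : ℤ) ^ n := by
  intro K _
  have hlim : Tendsto (fun k ↦ ((ℓ - ∑ i ∈ Finset.range k, (a i : ℤ) * (p : ℤ) ^ i : ℤ) : ℤ_[p]))
      atTop (𝓝 (ℓ - x)) := by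
    push_cast
    exact ha.2.tendsto_sum_nat.const_sub _
  obtain ⟨k, hndvd, hKk⟩ :=
    ((PadicInt.eventually_not_pow_dvd_of_tendsto hlim (sub_ne_zero.2 hℓ)).and
      (eventually_gt_atTop K)).exists
  exact ⟨k, hKk, exists_eq_mul_pow_of_not_pow_dvd hndvd⟩

/-- If `(ℓ : ℤ_p) ≠ x` then for every `K > 0` there is a `k > K` such that the truncation
`ℓ_k = ℓ − Σ_{i=0}^{k−1} a i · p^i` has the form `s · p^n` with `p ∤ s` and `0 ≤ n < k`. -/
theorem truncation_valuation_lt (p : ℕ) [Fact p.Prime] (hp5 : 5 ≤ p)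
    (x : ℤ_[p]) (a : ℕ → ℕ) (ha : IsDigitSequence p a x)
    (ℓ : ℤ) (hℓ : (ℓ : ℤ_[p]) ≠ x) :
    ∀ K : ℕ, 0 < K → ∃ k : ℕ, K < k ∧ ∃ s : ℤ, ∃ n : ℕ, ¬ ((p : ℤ) ∣ s) ∧ n < k ∧
      ℓ - ∑ i ∈ Finset.range k, (a i : ℤ) * (p : ℤ) ^ i = s * (p : ℤ) ^ n :=
  truncation_valuation_lt_general p x a ha ℓ hℓ
end

section
/- Let p ≥ 5 be a prime, let a_1, a_2, a_3, … be integers with 0 ≤ a_i ≤ p − 1 for all i ≥ 1, set α_n := Σ_{i=1}^n a_i · p^{i−1}, and let ℓ_0 ∈ ℤ. Then the set S := {n ≥ 1 : ℓ_0 ≤ α_n and α_n < p^{n−1} + ℓ_0 and a_{n+1} ≠ 0} is infinite if and only if both sets {i ≥ 1 : a_i = 0} and {i ≥ 1 : a_i ≠ 0} are infinite. -/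
/-!
Write `α n = ∑_{i<n} d i p^i` with digits `0 ≤ d i ≤ p - 1` (here `d i = a (i + 1)`). A nonzero
digit `d k` with `k < n` forces `p^k ≤ α n`; applied to the complementary digits `p - 1 - d i`,
whose expansion sums to `p^n - 1 - α n`, the same bound shows that a zero digit `d k` forces
`α n ≤ p^n - 1 - p^k`.

If `n < m` both lie in `S`, then `α (m-1) ≥ α n ≥ ℓ₀`, so a nonzero `a m` would give
`α m ≥ ℓ₀ + p^(m-1)`; hence all but finitely many elements of `S` are zero digits, while every
`n ∈ S` yields the nonzero digit `a (n+1)`. Conversely, once a zero and a nonzero digit occur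
beyond `log_p |ℓ₀|`, every later transition `a n = 0 ≠ a (n+1)` lies in `S`.
-/

open Finset

section DigitExpansion

variable {p : ℕ} {d : ℕ → ℤ}

lemma digitSum_mono (hd : ∀ i, 0 ≤ d i) :
    Monotone fun n => ∑ i ∈ range n, d i * (p : ℤ) ^ i := fun _ _ hmn =>
  sum_le_sum_of_subset_of_nonneg (range_subset_range.2 hmn) fun i _ _ =>
    mul_nonneg (hd i) (by positivity)

lemma pow_le_digitSum (hd : ∀ i, 0 ≤ d i) {k n : ℕ} (hk : d k ≠ 0) (hkn : k < n) :
    (p : ℤ) ^ k ≤ ∑ i ∈ range n, d i * (p : ℤ) ^ i :=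
  calc (p : ℤ) ^ k ≤ d k * (p : ℤ) ^ k :=
        le_mul_of_one_le_left (by positivity) (by have := hd k; omega)
    _ ≤ ∑ i ∈ range n, d i * (p : ℤ) ^ i :=
        single_le_sum (f := fun i => d i * (p : ℤ) ^ i)
          (fun i _ => mul_nonneg (hd i) (by positivity)) (mem_range.2 hkn)

lemma sum_range_complement_digit_mul_pow (n : ℕ) :
    ∑ i ∈ range n, ((p : ℤ) - 1 - d i) * (p : ℤ) ^ i =
      (p : ℤ) ^ n - 1 - ∑ i ∈ range n, d i * (p : ℤ) ^ i := by
  rw [← geom_sum_mul, sum_mul, ← sum_sub_distrib]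
  exact sum_congr rfl fun i _ => by ring

lemma digitSum_le_of_digit_eq_zero (hp : 2 ≤ p) (hd : ∀ i, d i ≤ p - 1) {k n : ℕ}
    (hk : d k = 0) (hkn : k < n) :
    ∑ i ∈ range n, d i * (p : ℤ) ^ i ≤ (p : ℤ) ^ n - 1 - (p : ℤ) ^ k := by
  have hcompl := pow_le_digitSum (p := p) (d := fun i => (p : ℤ) - 1 - d i)
    (fun i => by linarith [hd i]) (by simp only [hk]; omega) hkn
  rw [sum_range_complement_digit_mul_pow] at hcompl
  linarith

variable {ℓ₀ : ℤ}

lemma digit_eq_zero_of_digitSum_lt (hd : ∀ i, 0 ≤ d i) {n k : ℕ} (hnk : n ≤ k)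
    (hn : ℓ₀ ≤ ∑ i ∈ range n, d i * (p : ℤ) ^ i)
    (hk : ∑ i ∈ range (k + 1), d i * (p : ℤ) ^ i < (p : ℤ) ^ k + ℓ₀) : d k = 0 := by
  by_contra hdk
  have hpk : (p : ℤ) ^ k ≤ d k * (p : ℤ) ^ k :=
    le_mul_of_one_le_left (by positivity) (by have := hd k; omega)
  rw [sum_range_succ] at hk
  linarith [digitSum_mono (p := p) hd hnk]

lemma digitSum_succ_lt_of_digit_eq_zero (hp : 2 ≤ p) (hd : ∀ i, d i ≤ p - 1) {j k : ℕ}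
    (hj : d j = 0) (hjk : j < k) (hℓ₀ : -ℓ₀ ≤ (p : ℤ) ^ j) (hk : d k = 0) :
    ∑ i ∈ range (k + 1), d i * (p : ℤ) ^ i < (p : ℤ) ^ k + ℓ₀ := by
  rw [sum_range_succ, hk, zero_mul, add_zero]
  linarith [digitSum_le_of_digit_eq_zero hp hd hj hjk]

end DigitExpansion

lemma Nat.exists_lt_and_not_succ_of_infinite {P : ℕ → Prop} (hP : {i | P i}.Infinite)
    (hnP : {i | ¬P i}.Infinite) (N : ℕ) : ∃ n, N < n ∧ P n ∧ ¬P (n + 1) := by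
  by_contra! hstable
  obtain ⟨i, hi, hNi⟩ := hP.exists_gt N
  obtain ⟨j, hj, hij⟩ := hnP.exists_gt i
  exact hj (Nat.le_induction hi (fun m _ hm => hstable m (by omega) hm) j hij.le)

theorem survivors_infinite_iff_general (p : ℕ) (hp : p.Prime)
    (a : ℕ → ℤ) (ha : ∀ i : ℕ, 1 ≤ i → 0 ≤ a i ∧ a i ≤ (p : ℤ) - 1) (ℓ₀ : ℤ) :
    {n : ℕ | 1 ≤ n ∧
        ℓ₀ ≤ ∑ i ∈ Finset.range n, a (i + 1) * (p : ℤ) ^ i ∧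
        ∑ i ∈ Finset.range n, a (i + 1) * (p : ℤ) ^ i < (p : ℤ) ^ (n - 1) + ℓ₀ ∧
        a (n + 1) ≠ 0}.Infinite ↔
      ({i : ℕ | 1 ≤ i ∧ a i = 0}.Infinite ∧ {i : ℕ | 1 ≤ i ∧ a i ≠ 0}.Infinite) := by
  have hd0 : ∀ i, 0 ≤ a (i + 1) := fun i => (ha (i + 1) i.succ_pos).1
  have hd1 : ∀ i, a (i + 1) ≤ p - 1 := fun i => (ha (i + 1) i.succ_pos).2
  constructor
  · intro hS
    obtain ⟨n₀, -, hn₀, -⟩ := hS.nonempty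
    refine ⟨Set.infinite_of_forall_exists_gt fun N => ?_, ?_⟩
    · obtain ⟨m, ⟨-, -, hm, -⟩, hNm⟩ := hS.exists_gt (max N n₀)
      obtain ⟨k, rfl⟩ := Nat.exists_eq_add_one.mpr (by omega : 0 < m)
      rw [Nat.add_sub_cancel] at hm
      exact ⟨k + 1, ⟨k.succ_pos, digit_eq_zero_of_digitSum_lt hd0 (by omega) hn₀ hm⟩, by omega⟩
    · refine (hS.image Nat.succ_injective.injOn).mono ?_
      rintro _ ⟨n, ⟨-, -, -, hn⟩, rfl⟩
      exact ⟨n.succ_pos, hn⟩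
  · rintro ⟨hz, hnz⟩
    obtain ⟨t, ht⟩ := pow_unbounded_of_one_lt |ℓ₀| (by exact_mod_cast hp.one_lt : (1 : ℤ) < p)
    have hpow {s : ℕ} (hts : t ≤ s) : |ℓ₀| ≤ (p : ℤ) ^ s :=
      ht.le.trans (pow_le_pow_right₀ (by exact_mod_cast hp.one_lt.le) hts)
    obtain ⟨_, ⟨hj1, hj⟩, htj⟩ := hz.exists_gt t
    obtain ⟨j, rfl⟩ := Nat.exists_eq_add_one.mpr hj1
    obtain ⟨_, ⟨hi1, hi⟩, hti⟩ := hnz.exists_gt t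
    obtain ⟨i, rfl⟩ := Nat.exists_eq_add_one.mpr hi1
    refine Set.infinite_of_forall_exists_gt fun N => ?_
    obtain ⟨n, hNn, hn0, hn1⟩ := Nat.exists_lt_and_not_succ_of_infinite (P := fun i => a i = 0)
      (hz.mono fun _ h => h.2) (hnz.mono fun _ h => h.2) (N + i + j + 1)
    obtain ⟨k, rfl⟩ := Nat.exists_eq_add_one.mpr (by omega : 0 < n)
    refine ⟨k + 1, ⟨k.succ_pos, ?_, ?_, hn1⟩, by omega⟩
    · exact (le_abs_self ℓ₀).trans ((hpow (by omega)).trans (pow_le_digitSum hd0 hi (by omega)))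
    · rw [Nat.add_sub_cancel]
      exact digitSum_succ_lt_of_digit_eq_zero hp.two_le hd1 hj (by omega)
        (by linarith [neg_abs_le ℓ₀, hpow (s := j) (by omega)]) hn0

/-- Let `0 ≤ a i ≤ p − 1` for `i ≥ 1` and `α_n = Σ_{i=1}^n a i · p^(i−1)`, and let
`ℓ₀ ∈ ℤ`.  The set `S = {n ≥ 1 : ℓ₀ ≤ α_n < p^(n−1) + ℓ₀ and a (n+1) ≠ 0}` is
infinite iff both `{i ≥ 1 : a i = 0}` and `{i ≥ 1 : a i ≠ 0}` are infinite. -/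
theorem survivors_infinite_iff (p : ℕ) (hp : p.Prime) (hp5 : 5 ≤ p)
    (a : ℕ → ℤ) (ha : ∀ i : ℕ, 1 ≤ i → 0 ≤ a i ∧ a i ≤ (p : ℤ) - 1) (ℓ₀ : ℤ) :
    {n : ℕ | 1 ≤ n ∧
        ℓ₀ ≤ ∑ i ∈ Finset.range n, a (i + 1) * (p : ℤ) ^ i ∧
        ∑ i ∈ Finset.range n, a (i + 1) * (p : ℤ) ^ i < (p : ℤ) ^ (n - 1) + ℓ₀ ∧
        a (n + 1) ≠ 0}.Infinite ↔
      ({i : ℕ | 1 ≤ i ∧ a i = 0}.Infinite ∧ {i : ℕ | 1 ≤ i ∧ a i ≠ 0}.Infinite) :=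
  survivors_infinite_iff_general p hp a ha ℓ₀
end

section
/- Let p ≥ 5 be a prime, let a_1, a_2, a_3, … be integers with 0 ≤ a_i ≤ p − 1 for all i ≥ 1, and set α_n := Σ_{i=1}^n a_i · p^{i−1}. For ℓ_0 ∈ ℤ let S(ℓ_0) := {n ≥ 1 : ℓ_0 ≤ α_n and α_n < p^{n−1} + ℓ_0 and a_{n+1} ≠ 0}. If S(ℓ_0) is infinite for some ℓ_0 ∈ ℤ, then S(ℓ_0') is infinite for every ℓ_0' ∈ ℤ. -/
/-- `alf p a n = Σ_{i=1}^n a i · p^(i−1)`, the partial sums of the digit expansion. -/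
private def alf (p : ℕ) (a : ℕ → ℤ) (n : ℕ) : ℤ :=
  ∑ i ∈ Finset.range n, a (i + 1) * (p : ℤ) ^ i

private lemma alf_succ (p : ℕ) (a : ℕ → ℤ) (n : ℕ) :
    alf p a (n + 1) = alf p a n + a (n + 1) * (p : ℤ) ^ n :=
  Finset.sum_range_succ _ _

private lemma alf_mono (p : ℕ) (a : ℕ → ℤ)
    (ha : ∀ i : ℕ, 1 ≤ i → 0 ≤ a i ∧ a i ≤ (p : ℤ) - 1)
    {m n : ℕ} (hmn : m ≤ n) : alf p a m ≤ alf p a n := by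
  induction n, hmn using Nat.le_induction with
  | base => exact le_refl _
  | succ n hmn ih =>
    have h1 := (ha (n + 1) (by omega)).1
    have h2 : (0:ℤ) ≤ (p:ℤ) ^ n := by positivity
    have h3 := mul_nonneg h1 h2
    rw [alf_succ]; linarith

private lemma alf_bound (p : ℕ) (a : ℕ → ℤ)
    (ha : ∀ i : ℕ, 1 ≤ i → 0 ≤ a i ∧ a i ≤ (p : ℤ) - 1)
    {m n : ℕ} (hmn : m ≤ n) : alf p a n ≤ alf p a m + ((p:ℤ) ^ n - (p:ℤ) ^ m) := by
  induction n, hmn using Nat.le_induction with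
  | base => simp
  | succ n hmn ih =>
    have h1 := (ha (n + 1) (by omega)).2
    have h2 : (0:ℤ) ≤ (p:ℤ) ^ n := by positivity
    have h3 : a (n+1) * (p:ℤ)^n ≤ ((p:ℤ) - 1) * (p:ℤ)^n := mul_le_mul_of_nonneg_right h1 h2
    have h4 : (p:ℤ)^(n+1) = (p:ℤ) * (p:ℤ)^n := by ring
    rw [alf_succ]
    nlinarith

private lemma pow_big (p : ℕ) (hp2 : 2 ≤ p) (k : ℕ) : (k:ℤ) + 1 ≤ (p:ℤ) ^ k := by
  have h1 : k < 2 ^ k := Nat.lt_two_pow_self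
  have h2 : 2 ^ k ≤ p ^ k := Nat.pow_le_pow_left hp2 k
  have h3 : k + 1 ≤ p ^ k := by omega
  exact_mod_cast h3

/-- With `α_n = Σ_{i=1}^n a i · p^(i−1)` and
`S(ℓ₀) = {n ≥ 1 : ℓ₀ ≤ α_n < p^(n−1) + ℓ₀ and a (n+1) ≠ 0}`:
if `S(ℓ₀)` is infinite for some `ℓ₀ ∈ ℤ` then it is infinite for every `ℓ₀' ∈ ℤ`. -/
theorem survivors_infinite_all_degrees (p : ℕ) (hp : p.Prime) (hp5 : 5 ≤ p)
    (a : ℕ → ℤ) (ha : ∀ i : ℕ, 1 ≤ i → 0 ≤ a i ∧ a i ≤ (p : ℤ) - 1)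
    (ℓ₀ : ℤ)
    (h : {n : ℕ | 1 ≤ n ∧
        ℓ₀ ≤ ∑ i ∈ Finset.range n, a (i + 1) * (p : ℤ) ^ i ∧
        ∑ i ∈ Finset.range n, a (i + 1) * (p : ℤ) ^ i < (p : ℤ) ^ (n - 1) + ℓ₀ ∧
        a (n + 1) ≠ 0}.Infinite) :
    ∀ ℓ₀' : ℤ, {n : ℕ | 1 ≤ n ∧
        ℓ₀' ≤ ∑ i ∈ Finset.range n, a (i + 1) * (p : ℤ) ^ i ∧
        ∑ i ∈ Finset.range n, a (i + 1) * (p : ℤ) ^ i < (p : ℤ) ^ (n - 1) + ℓ₀' ∧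
        a (n + 1) ≠ 0}.Infinite := by
  intro ℓ'
  have hp2 : 2 ≤ p := by omega
  have hp2' : (2:ℤ) ≤ (p:ℤ) := by exact_mod_cast hp2
  apply Set.infinite_of_not_bddAbove
  intro hbdd
  obtain ⟨N, hN⟩ := hbdd
  set B : ℕ := (ℓ₀ - ℓ').natAbs with hB
  obtain ⟨n, hn, hnN⟩ := h.exists_gt (max (N + 1) (B + 2))
  obtain ⟨n', hn', hn'n⟩ := h.exists_gt n
  obtain ⟨hn1, hn2, hn3, hn4⟩ := hn
  obtain ⟨hn'1, hn'2, hn'3, hn'4⟩ := hn'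
  have hNn : N + 1 ≤ n := le_trans (le_max_left _ _) (le_of_lt hnN)
  have hBn : B + 2 ≤ n := le_trans (le_max_right _ _) (le_of_lt hnN)
  obtain ⟨k, rfl⟩ : ∃ k, n = k + 1 := ⟨n - 1, by omega⟩
  obtain ⟨m, rfl⟩ : ∃ m, n' = m + 1 := ⟨n' - 1, by omega⟩
  simp only [Nat.add_sub_cancel] at hn3 hn'3
  -- rename the sums
  have a2 : ℓ₀ ≤ alf p a (k+1) := hn2
  have a3 : alf p a (k+1) < (p:ℤ)^k + ℓ₀ := hn3
  have b2 : ℓ₀ ≤ alf p a (m+1) := hn'2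
  have b3 : alf p a (m+1) < (p:ℤ)^m + ℓ₀ := hn'3
  have hkm : k + 2 ≤ m + 1 := by omega
  -- size of p^k relative to ℓ₀ - ℓ'
  have habs1 : ℓ₀ - ℓ' ≤ (B:ℤ) := by rw [hB]; exact Int.le_natAbs
  have habs2 : ℓ' - ℓ₀ ≤ (B:ℤ) := by
    rw [hB]
    have : -(ℓ₀ - ℓ') ≤ |ℓ₀ - ℓ'| := neg_le_abs _
    rw [Int.abs_eq_natAbs] at this
    linarith
  have hpB : (B:ℤ) + 1 ≤ (p:ℤ)^B := pow_big p hp2 B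
  have hpBk : (p:ℤ)^B ≤ (p:ℤ)^k := pow_le_pow_right₀ (by linarith) (by omega)
  have hgap1 : ℓ₀ - ℓ' < (p:ℤ)^k := by linarith
  have hgap2 : ℓ' - ℓ₀ < (p:ℤ)^k := by linarith
  have hpk : (0:ℤ) < (p:ℤ)^k := by positivity
  have hpm : (0:ℤ) < (p:ℤ)^m := by positivity
  have hpk1 : (p:ℤ)^k ≤ (p:ℤ)^(k+1) := pow_le_pow_right₀ (by linarith) (by omega)
  have hpsucc : (p:ℤ)^(k+1) = (p:ℤ)^k * (p:ℤ) := pow_succ _ _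
  -- a (k+2) ≥ 1
  have ha1 : 1 ≤ a (k + 1 + 1) := by
    have h0 := (ha (k + 1 + 1) (by omega)).1
    omega
  -- lower bound : ℓ' ≤ alf p a (m+1)
  have hlow : ℓ' ≤ alf p a (m + 1) := by
    have e1 : alf p a (k+2) = alf p a (k+1) + a (k+2) * (p:ℤ)^(k+1) := alf_succ p a (k+1)
    have e2 : alf p a (k+2) ≤ alf p a (m+1) := alf_mono p a ha hkm
    have hpk1' : (0:ℤ) < (p:ℤ)^(k+1) := by positivity
    have e3 : (p:ℤ)^(k+1) ≤ a (k+2) * (p:ℤ)^(k+1) := le_mul_of_one_le_left (le_of_lt hpk1') ha1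
    have : alf p a (k+2) ≥ ℓ₀ + (p:ℤ)^(k+1) := by linarith
    linarith
  -- upper bound : alf p a (m+1) < p^m + ℓ'
  have hhigh : alf p a (m + 1) < (p:ℤ)^m + ℓ' := by
    by_contra hcon
    push_neg at hcon
    -- the digit a (m+1) is zero
    have hmono1 : alf p a (k+1) ≤ alf p a m := alf_mono p a ha (by omega)
    have e1 : alf p a (m+1) = alf p a m + a (m+1) * (p:ℤ)^m := alf_succ p a m
    have hd0 : 0 ≤ a (m+1) := (ha (m+1) (by omega)).1
    have hdlt : a (m+1) * (p:ℤ)^m < 1 * (p:ℤ)^m := by linarith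
    have hd1 : a (m+1) < 1 := lt_of_mul_lt_mul_right hdlt (le_of_lt hpm)
    have hd : a (m+1) = 0 := by omega
    have e2 : alf p a (m+1) = alf p a m := by rw [e1, hd]; ring
    have e3 : alf p a m ≤ alf p a (k+1) + ((p:ℤ)^m - (p:ℤ)^(k+1)) :=
      alf_bound p a ha (by omega)
    -- derive contradiction
    have : (p:ℤ)^m + ℓ' ≤ (p:ℤ)^k + ℓ₀ - 1 + (p:ℤ)^m - (p:ℤ)^(k+1) := by linarith
    nlinarith
  -- n' = m+1 is in S(ℓ') and exceeds the bound N
  have hmem : (m+1) ∈ {n : ℕ | 1 ≤ n ∧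
      ℓ' ≤ ∑ i ∈ Finset.range n, a (i + 1) * (p : ℤ) ^ i ∧
      ∑ i ∈ Finset.range n, a (i + 1) * (p : ℤ) ^ i < (p : ℤ) ^ (n - 1) + ℓ' ∧
      a (n + 1) ≠ 0} := by
    refine ⟨by omega, hlow, ?_, hn'4⟩
    simpa only [Nat.add_sub_cancel, alf] using hhigh
  have := hN hmem
  omega
end

section
/- Let p ≥ 5 be a prime and let λ̄ := Σ_{i=0}^∞ p^i ∈ ℤ_p (equivalently λ̄ = (1 − p)⁻¹, since 1 − p is a unit in ℤ_p). Then x ∈ ℤ_p has the finiteness property if and only if λ̄ − x has the finiteness property. -/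
/-- `x ∈ ℤ_p` has the finiteness property if it admits a digit sequence with only
finitely many zero entries or only finitely many nonzero entries. -/
def HasFinitenessProperty (p : ℕ) [Fact p.Prime] (x : ℤ_[p]) : Prop :=
  ∃ a : ℕ → ℕ, IsDigitSequence p a x ∧
    ({i | a i = 0}.Finite ∨ {i | a i ≠ 0}.Finite)

namespace FinitenessAux

/-- The borrow sequence when computing `λ̄ - x` digitwise. -/
def bor (a : ℕ → ℕ) : ℕ → ℕ
  | 0 => 0
  | i + 1 => if 2 ≤ a i + bor a i then 1 else 0

lemma bor_le_one (a : ℕ → ℕ) : ∀ i, bor a i ≤ 1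
  | 0 => by simp [bor]
  | i + 1 => by rw [bor]; split <;> omega

lemma bor_succ (a : ℕ → ℕ) (i : ℕ) :
    bor a (i + 1) = if 2 ≤ a i + bor a i then 1 else 0 := rfl

/-- The digit sequence of `λ̄ - x` in terms of that of `x`. -/
def comp (p : ℕ) (a : ℕ → ℕ) (i : ℕ) : ℕ :=
  1 + p * bor a (i + 1) - (a i + bor a i)

lemma le_comp_aux (p : ℕ) (hp : 2 ≤ p) (a : ℕ → ℕ) (ha : ∀ i, a i ≤ p - 1) (i : ℕ) :
    a i + bor a i ≤ 1 + p * bor a (i + 1) := by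
  have h1 := bor_le_one a i
  have h2 := ha i
  rw [bor_succ]; split <;> omega

lemma comp_le (p : ℕ) (hp : 2 ≤ p) (a : ℕ → ℕ) (ha : ∀ i, a i ≤ p - 1) (i : ℕ) :
    comp p a i ≤ p - 1 := by
  have h1 := bor_le_one a i
  have h2 := ha i
  unfold comp
  rw [bor_succ]; split <;> omega

lemma comp_cast (p : ℕ) [Fact p.Prime] (a : ℕ → ℕ) (ha : ∀ i, a i ≤ p - 1) (i : ℕ) :
    (comp p a i : ℤ_[p]) =
      1 + (p : ℤ_[p]) * (bor a (i + 1) : ℤ_[p]) - (a i : ℤ_[p]) - (bor a i : ℤ_[p]) := by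
  have h := le_comp_aux p (Fact.out : p.Prime).two_le a ha i
  unfold comp
  push_cast [Nat.cast_sub h]
  ring

lemma sum_comp (p : ℕ) [Fact p.Prime] (a : ℕ → ℕ) (ha : ∀ i, a i ≤ p - 1) (N : ℕ) :
    ∑ i ∈ Finset.range N, (comp p a i : ℤ_[p]) * (p : ℤ_[p]) ^ i =
      (∑ i ∈ Finset.range N, ((p : ℤ_[p]) ^ i - (a i : ℤ_[p]) * (p : ℤ_[p]) ^ i)) +
        (bor a N : ℤ_[p]) * (p : ℤ_[p]) ^ N := by
  induction N with
  | zero => simp [bor]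
  | succ N ih =>
    rw [Finset.sum_range_succ, Finset.sum_range_succ, ih, comp_cast p a ha]
    ring

lemma norm_p_lt_one (p : ℕ) [hp : Fact p.Prime] : ‖(p : ℤ_[p])‖ < 1 := by
  rw [PadicInt.norm_p]
  rw [inv_lt_one_iff₀]
  right
  exact_mod_cast hp.out.one_lt

lemma summable_digits (p : ℕ) [Fact p.Prime] (b : ℕ → ℕ) :
    Summable (fun i : ℕ => ‖(b i : ℤ_[p]) * (p : ℤ_[p]) ^ i‖) := by
  apply Summable.of_nonneg_of_le (fun i => norm_nonneg _)
    (fun i => ?_)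
    (summable_geometric_of_lt_one (norm_nonneg (p : ℤ_[p])) (norm_p_lt_one p))
  rw [norm_mul, norm_pow]
  exact mul_le_of_le_one_left (pow_nonneg (norm_nonneg _) _) (PadicInt.norm_le_one _)

lemma key (p : ℕ) [Fact p.Prime] (hp5 : 5 ≤ p) (x : ℤ_[p]) (h : HasFinitenessProperty p x) :
    HasFinitenessProperty p ((∑' i : ℕ, (p : ℤ_[p]) ^ i) - x) := by
  obtain ⟨a, ⟨ha1, ha2⟩, hfin⟩ := h
  have hp2 : 2 ≤ p := (Fact.out : p.Prime).two_le
  refine ⟨comp p a, ⟨comp_le p hp2 a ha1, ?_⟩, ?_⟩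
  · -- the sum identity
    have hgeo : HasSum (fun i : ℕ => (p : ℤ_[p]) ^ i) (∑' i : ℕ, (p : ℤ_[p]) ^ i) := by
      have : Summable (fun i : ℕ => (p : ℤ_[p]) ^ i) := by
        have := (summable_digits p (fun _ => 1)).of_norm
        simpa using this
      exact this.hasSum
    rw [hasSum_iff_tendsto_nat_of_summable_norm (summable_digits p (comp p a))]
    have h1 : Filter.Tendsto
        (fun N => ∑ i ∈ Finset.range N, ((p : ℤ_[p]) ^ i - (a i : ℤ_[p]) * (p : ℤ_[p]) ^ i))
        Filter.atTop (nhds ((∑' i : ℕ, (p : ℤ_[p]) ^ i) - x)) := by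
      simp only [Finset.sum_sub_distrib]
      exact hgeo.tendsto_sum_nat.sub ha2.tendsto_sum_nat
    have h2 : Filter.Tendsto (fun N => (bor a N : ℤ_[p]) * (p : ℤ_[p]) ^ N)
        Filter.atTop (nhds 0) := by
      apply squeeze_zero_norm (fun N => ?_)
        (tendsto_pow_atTop_nhds_zero_of_lt_one (norm_nonneg (p : ℤ_[p])) (norm_p_lt_one p))
      rw [norm_mul, norm_pow]
      exact mul_le_of_le_one_left (pow_nonneg (norm_nonneg _) _) (PadicInt.norm_le_one _)
    have := h1.add h2
    rw [add_zero] at this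
    refine this.congr fun N => ?_
    rw [sum_comp p a ha1]
  · -- finiteness
    rcases hfin with hz | hnz
    · -- finitely many zero digits of a : a i ≠ 0 eventually
      obtain ⟨N, hN⟩ := hz.bddAbove
      have hane : ∀ i, N + 1 ≤ i → a i ≠ 0 := by
        intro i hi h0
        exact absurd (hN h0) (by omega)
      by_cases hb : ∃ j, N + 1 ≤ j ∧ bor a (j + 1) = 1
      · -- a borrow occurs; it then persists and all digits of the complement are nonzero
        obtain ⟨j, hj, hbj⟩ := hb
        have hpers : ∀ k, bor a (j + 1 + k) = 1 := by
          intro k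
          induction k with
          | zero => exact hbj
          | succ k ih =>
            have hai : a (j + 1 + k) ≠ 0 := hane _ (by omega)
            rw [show j + 1 + (k + 1) = (j + 1 + k) + 1 from rfl, bor_succ, if_pos (by omega)]
        left
        apply Set.Finite.subset (Set.finite_Iio (j + 1))
        intro i hi
        simp only [Set.mem_setOf_eq] at hi
        by_contra hlt
        simp only [Set.mem_Iio, not_lt] at hlt
        have hc1 : bor a i = 1 := by
          obtain ⟨k, rfl⟩ := Nat.exists_eq_add_of_le hlt
          exact hpers k
        have hc2 : bor a (i + 1) = 1 := by
          have : i + 1 = j + 1 + (i - j) := by omega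
          rw [this]; exact hpers _
        have hai : a i ≤ p - 1 := ha1 i
        unfold comp at hi
        rw [hc1, hc2] at hi
        omega
      · -- no borrow ever occurs past N: digits a i = 1 and complement digits are 0 eventually
        push_neg at hb
        have hb0 : ∀ j, N + 1 ≤ j → bor a (j + 1) = 0 := by
          intro j hj
          have := bor_le_one a (j + 1)
          have := hb j hj
          omega
        right
        apply Set.Finite.subset (Set.finite_Iio (N + 2))
        intro i hi
        simp only [Set.mem_setOf_eq] at hi
        by_contra hlt
        simp only [Set.mem_Iio, not_lt] at hlt
        apply hi
        have hib : bor a i = 0 := by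
          have : i = (i - 1) + 1 := by omega
          rw [this]; exact hb0 _ (by omega)
        have hib1 : bor a (i + 1) = 0 := hb0 i (by omega)
        have hai1 : a i = 1 := by
          have h2' : ¬ 2 ≤ a i + bor a i := by
            by_contra hcon
            rw [bor_succ, if_pos hcon] at hib1
            omega
          have := hane i (by omega)
          omega
        unfold comp
        rw [hib, hib1, hai1]
        omega
    · -- finitely many nonzero digits of a : a i = 0 eventually, complement digits become 1
      obtain ⟨N, hN⟩ := hnz.bddAbove
      have ha0 : ∀ i, N + 1 ≤ i → a i = 0 := by
        intro i hi
        by_contra h0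
        exact absurd (hN h0) (by omega)
      have hb0 : ∀ i, N + 1 ≤ i → bor a (i + 1) = 0 := by
        intro i hi
        rw [bor_succ, ha0 i hi, if_neg (by have := bor_le_one a i; omega)]
      left
      apply Set.Finite.subset (Set.finite_Iio (N + 2))
      intro i hi
      simp only [Set.mem_setOf_eq] at hi
      by_contra hlt
      simp only [Set.mem_Iio, not_lt] at hlt
      have hib : bor a i = 0 := by
        have : i = (i - 1) + 1 := by omega
        rw [this]; exact hb0 _ (by omega)
      have hib1 : bor a (i + 1) = 0 := hb0 i (by omega)
      unfold comp at hi
      rw [hib, hib1, ha0 i (by omega)] at hi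
      omega

end FinitenessAux

/-- With `λ̄ = Σ_{i=0}^∞ p^i ∈ ℤ_p`, `x` has the finiteness property iff `λ̄ − x` does. -/
theorem finiteness_property_lambda_sub (p : ℕ) [Fact p.Prime] (hp5 : 5 ≤ p) (x : ℤ_[p]) :
    HasFinitenessProperty p x ↔
      HasFinitenessProperty p ((∑' i : ℕ, (p : ℤ_[p]) ^ i) - x) := by
  constructor
  · exact FinitenessAux.key p hp5 x
  · intro h
    have := FinitenessAux.key p hp5 _ h
    rwa [sub_sub_cancel] at this
end

section
/- Let p ≥ 5 be a prime, x ∈ ℤ_p, and m ∈ ℤ. Then x has the finiteness property if and only if x + (m : ℤ_p) has the finiteness property. -/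
open Filter Finset

namespace FinShift

variable {p : ℕ} [hp : Fact p.Prime]

lemma norm_ppow (i : ℕ) : ‖(p : ℤ_[p]) ^ i‖ = ((p : ℝ)⁻¹) ^ i := by
  rw [PadicInt.norm_p_pow, zpow_neg, inv_pow, zpow_natCast]

lemma summable_digit_series (a : ℕ → ℕ) :
    Summable (fun i : ℕ => (a i : ℤ_[p]) * (p : ℤ_[p]) ^ i) := by
  apply NonarchimedeanAddGroup.summable_of_tendsto_cofinite_zero
  rw [Nat.cofinite_eq_atTop, tendsto_zero_iff_norm_tendsto_zero]
  have hb : ∀ i : ℕ, ‖(a i : ℤ_[p]) * (p : ℤ_[p]) ^ i‖ ≤ ((p : ℝ)⁻¹) ^ i := by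
    intro i
    calc ‖(a i : ℤ_[p]) * (p : ℤ_[p]) ^ i‖ ≤ ‖(a i : ℤ_[p])‖ * ‖(p : ℤ_[p]) ^ i‖ :=
          norm_mul_le _ _
      _ ≤ 1 * ‖(p : ℤ_[p]) ^ i‖ := by
          gcongr; exact PadicInt.norm_le_one _
      _ = ((p : ℝ)⁻¹) ^ i := by rw [one_mul, norm_ppow]
  have hp1 : (1 : ℝ) < (p : ℝ) := by
    exact_mod_cast hp.out.one_lt
  refine squeeze_zero (fun i => norm_nonneg _) hb ?_
  exact tendsto_pow_atTop_nhds_zero_of_lt_one (by positivity) (inv_lt_one_of_one_lt₀ hp1)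

lemma tendsto_p_pow : Tendsto (fun n : ℕ => (p : ℤ_[p]) ^ n) atTop (nhds 0) := by
  rw [tendsto_zero_iff_norm_tendsto_zero]
  have hp1 : (1 : ℝ) < (p : ℝ) := by exact_mod_cast hp.out.one_lt
  simp only [norm_ppow]
  exact tendsto_pow_atTop_nhds_zero_of_lt_one (by positivity) (inv_lt_one_of_one_lt₀ hp1)

lemma hasSum_allmax : HasSum (fun i : ℕ => (((p - 1 : ℕ)) : ℤ_[p]) * (p : ℤ_[p]) ^ i) (-1) := by
  have hsum := (summable_digit_series (p := p) (fun _ => p - 1)).hasSum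
  have hps : ∀ n : ℕ, ∑ i ∈ range n, (((p - 1 : ℕ)) : ℤ_[p]) * (p : ℤ_[p]) ^ i
      = (p : ℤ_[p]) ^ n - 1 := by
    intro n
    have hc : (((p - 1 : ℕ)) : ℤ_[p]) = (p : ℤ_[p]) - 1 := by
      push_cast [Nat.cast_sub hp.out.one_le]; ring
    rw [← Finset.mul_sum, hc, mul_comm, geom_sum_mul]
  have h1 := hsum.tendsto_sum_nat
  simp only [hps] at h1
  have h2 : Tendsto (fun n : ℕ => (p : ℤ_[p]) ^ n - 1) atTop (nhds (0 - 1)) :=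
    tendsto_p_pow.sub tendsto_const_nhds
  rw [zero_sub] at h2
  have := tendsto_nhds_unique h1 h2
  rwa [this] at hsum

/-- Modify a convergent series on a finite set. -/
lemma hasSum_update (f g : ℕ → ℤ_[p]) (x : ℤ_[p]) (s : Finset ℕ) (hfg : ∀ i ∉ s, g i = f i)
    (hf : HasSum f x) : HasSum g (x + ∑ i ∈ s, (g i - f i)) := by
  have h : HasSum (fun i => g i - f i) (∑ i ∈ s, (g i - f i)) :=
    hasSum_sum_of_ne_finset_zero (fun i hi => by rw [hfg i hi, sub_self])
  have h2 := hf.add h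
  have h3 : (fun i => f i + (g i - f i)) = g := by funext i; ring
  rwa [h3] at h2

/-- The `i`-th base-`p` digit of a natural number. -/
def dgt (p n i : ℕ) : ℕ := n / p ^ i % p

lemma dgt_le (n i : ℕ) : dgt p n i ≤ p - 1 :=
  Nat.le_sub_one_of_lt (Nat.mod_lt _ hp.out.pos)

lemma dgt_eq_zero {n i : ℕ} (h : n < p ^ i) : dgt p n i = 0 := by
  unfold dgt
  rw [Nat.div_eq_of_lt h, Nat.zero_mod]

lemma sum_dgt (n K : ℕ) : ∑ i ∈ range K, dgt p n i * p ^ i = n % p ^ K := by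
  induction K with
  | zero => simp [Nat.mod_one]
  | succ K ih =>
    rw [Finset.sum_range_succ, ih, Nat.mod_pow_succ]
    unfold dgt
    ring

lemma hasSum_nat (n : ℕ) :
    HasSum (fun i : ℕ => ((dgt p n i : ℤ_[p])) * (p : ℤ_[p]) ^ i) (n : ℤ_[p]) := by
  obtain ⟨K, hK⟩ : ∃ K, n < p ^ K := ⟨n, Nat.lt_pow_self (n := n) hp.out.one_lt⟩
  have h0 : ∀ i ∉ range K, ((dgt p n i : ℤ_[p])) * (p : ℤ_[p]) ^ i = 0 := by
    intro i hi
    rw [Finset.mem_range, not_lt] at hi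
    have : n < p ^ i := lt_of_lt_of_le hK (Nat.pow_le_pow_right hp.out.pos hi)
    rw [dgt_eq_zero this, Nat.cast_zero, zero_mul]
  have h := hasSum_sum_of_ne_finset_zero (L := SummationFilter.unconditional ℕ) h0
  have hsum : ∑ i ∈ range K, ((dgt p n i : ℤ_[p])) * (p : ℤ_[p]) ^ i = (n : ℤ_[p]) := by
    have := sum_dgt (p := p) n K
    have hmod : n % p ^ K = n := Nat.mod_eq_of_lt hK
    rw [hmod] at this
    calc ∑ i ∈ range K, ((dgt p n i : ℤ_[p])) * (p : ℤ_[p]) ^ i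
        = ((∑ i ∈ range K, dgt p n i * p ^ i : ℕ) : ℤ_[p]) := by push_cast; ring
      _ = (n : ℤ_[p]) := by rw [this]
  rwa [hsum] at h

lemma cast_pred (hpl : 1 ≤ p) : (((p - 1 : ℕ)) : ℤ_[p]) = (p : ℤ_[p]) - 1 := by
  push_cast [Nat.cast_sub hpl]; ring

/-- Any integer has the finiteness property. -/
lemma hfp_int (m : ℤ) : HasFinitenessProperty p ((m : ℤ_[p])) := by
  rcases le_or_gt 0 m with hm | hm
  · -- nonnegative: use base-p digits
    obtain ⟨n, rfl⟩ := Int.eq_ofNat_of_zero_le hm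
    refine ⟨dgt p n, ⟨fun i => dgt_le n i, ?_⟩, Or.inr ?_⟩
    · have := hasSum_nat (p := p) n
      simpa using this
    · obtain ⟨K, hK⟩ : ∃ K, n < p ^ K := ⟨n, Nat.lt_pow_self (n := n) hp.out.one_lt⟩
      apply Set.Finite.subset (Set.finite_Iio K)
      intro i hi
      simp only [Set.mem_setOf_eq] at hi
      by_contra h
      rw [Set.mem_Iio, not_lt] at h
      exact hi (dgt_eq_zero (lt_of_lt_of_le hK (Nat.pow_le_pow_right hp.out.pos h)))
  · -- negative
    obtain ⟨t, rfl⟩ : ∃ t : ℕ, m = -(t + 1 : ℕ) := by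
      refine ⟨(-m - 1).toNat, ?_⟩
      omega
    obtain ⟨N, hN⟩ : ∃ N, (t : ℕ) + 1 ≤ p ^ N := ⟨t + 1, (Nat.lt_pow_self (n := t+1) hp.out.one_lt).le⟩
    set u : ℕ := p ^ N - (t + 1) with hu
    have hult : u < p ^ N := by omega
    set b : ℕ → ℕ := fun i => if i < N then dgt p u i else p - 1 with hb
    refine ⟨b, ⟨?_, ?_⟩, Or.inl ?_⟩
    · intro i
      by_cases h : i < N <;> simp [hb, h, dgt_le]
    · -- HasSum
      have hbase := hasSum_allmax (p := p)
      have key := hasSum_update (fun i => (((p - 1 : ℕ)) : ℤ_[p]) * (p : ℤ_[p]) ^ i)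
        (fun i => ((b i : ℤ_[p])) * (p : ℤ_[p]) ^ i) (-1) (range N)
        (fun i hi => by
          rw [Finset.mem_range, not_lt] at hi
          simp [hb, Nat.not_lt.mpr hi]) hbase
      have hsum1 : ∑ i ∈ range N, ((b i : ℤ_[p]) * (p : ℤ_[p]) ^ i
            - (((p - 1 : ℕ)) : ℤ_[p]) * (p : ℤ_[p]) ^ i)
          = (u : ℤ_[p]) - ((p : ℤ_[p]) ^ N - 1) := by
        rw [Finset.sum_sub_distrib]
        have e1 : ∑ i ∈ range N, ((b i : ℤ_[p])) * (p : ℤ_[p]) ^ i = (u : ℤ_[p]) := by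
          have : ∀ i ∈ range N, ((b i : ℤ_[p])) * (p : ℤ_[p]) ^ i
              = ((dgt p u i : ℤ_[p])) * (p : ℤ_[p]) ^ i := by
            intro i hi
            rw [Finset.mem_range] at hi
            simp [hb, hi]
          rw [Finset.sum_congr rfl this]
          have hnat := sum_dgt (p := p) u N
          rw [Nat.mod_eq_of_lt hult] at hnat
          calc ∑ i ∈ range N, ((dgt p u i : ℤ_[p])) * (p : ℤ_[p]) ^ i
              = ((∑ i ∈ range N, dgt p u i * p ^ i : ℕ) : ℤ_[p]) := by push_cast; ring
            _ = (u : ℤ_[p]) := by rw [hnat]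
        have e2 : ∑ i ∈ range N, (((p - 1 : ℕ)) : ℤ_[p]) * (p : ℤ_[p]) ^ i
            = (p : ℤ_[p]) ^ N - 1 := by
          rw [← Finset.mul_sum, cast_pred hp.out.one_le, mul_comm, geom_sum_mul]
        rw [e1, e2]
      rw [hsum1] at key
      have hval : (-1 : ℤ_[p]) + ((u : ℤ_[p]) - ((p : ℤ_[p]) ^ N - 1))
          = ((-(t + 1 : ℕ) : ℤ) : ℤ_[p]) := by
        have hu' : (u : ℤ_[p]) = (p : ℤ_[p]) ^ N - ((t : ℤ_[p]) + 1) := by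
          have : ((u : ℕ) : ℤ_[p]) = ((p ^ N : ℕ) : ℤ_[p]) - (((t + 1 : ℕ)) : ℤ_[p]) := by
            rw [← Nat.cast_sub hN]
          push_cast at this ⊢
          rw [this]
        rw [hu']; push_cast; ring
      rwa [hval] at key
    · -- finitely many zeros
      apply Set.Finite.subset (Set.finite_Iio N)
      intro i hi
      simp only [Set.mem_setOf_eq] at hi
      rw [Set.mem_Iio]
      by_contra h
      rw [not_lt] at h
      have : b i = p - 1 := by simp [hb, Nat.not_lt.mpr h]
      rw [this] at hi
      have := hp.out.two_le
      omega

lemma sum_digits_lt (a : ℕ → ℕ) (hb : ∀ i, a i ≤ p - 1) (N : ℕ) :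
    ∑ i ∈ range N, a i * p ^ i < p ^ N := by
  have key : ∀ N, (∑ i ∈ range N, a i * p ^ i) + 1 ≤ p ^ N := by
    intro N
    induction N with
    | zero => simp
    | succ N ih =>
      rw [Finset.sum_range_succ, pow_succ]
      have h1 : a N * p ^ N ≤ (p - 1) * p ^ N := Nat.mul_le_mul_right _ (hb N)
      have h2 : (p - 1) * p ^ N + p ^ N = p ^ N * p := by
        have := hp.out.one_le
        rw [Nat.sub_one_mul, mul_comm (p ^ N) p]
        have h3 : p ^ N ≤ p * p ^ N := Nat.le_mul_of_pos_left _ hp.out.pos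
        omega
      omega
  have := key N
  omega

lemma cast_sum_digits (a : ℕ → ℕ) (N : ℕ) :
    ((∑ i ∈ range N, a i * p ^ i : ℕ) : ℤ_[p])
      = ∑ i ∈ range N, (a i : ℤ_[p]) * (p : ℤ_[p]) ^ i := by
  push_cast
  ring

lemma hfp_shift (x : ℤ_[p]) (m : ℤ) (h : HasFinitenessProperty p x) :
    HasFinitenessProperty p (x + (m : ℤ_[p])) := by
  obtain ⟨a, ⟨hbound, hsum⟩, hfin⟩ := h
  rcases hfin with hzf | hnf
  · -- finitely many zero digits
    obtain ⟨N₀, hN₀⟩ : ∃ N₀, ∀ i, N₀ ≤ i → a i ≠ 0 := by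
      obtain ⟨K, hK⟩ := hzf.bddAbove
      refine ⟨K + 1, fun i hi h0 => ?_⟩
      have := hK (Set.mem_setOf_eq ▸ h0 : i ∈ {i | a i = 0})
      omega
    by_cases hmax : {i | a i ≠ p - 1}.Finite
    · -- eventually all digits are p - 1 : x is a negative integer
      obtain ⟨K, hK⟩ : ∃ K, ∀ i, K ≤ i → a i = p - 1 := by
        obtain ⟨K, hK⟩ := hmax.bddAbove
        refine ⟨K + 1, fun i hi => ?_⟩
        by_contra h0
        have := hK (Set.mem_setOf_eq ▸ h0 : i ∈ {i | a i ≠ p - 1})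
        omega
      set c : ℕ := ∑ i ∈ range K, a i * p ^ i with hc
      have key := hasSum_update (fun i => (((p - 1 : ℕ)) : ℤ_[p]) * (p : ℤ_[p]) ^ i)
        (fun i => ((a i : ℤ_[p])) * (p : ℤ_[p]) ^ i) (-1) (range K)
        (fun i hi => by
          rw [Finset.mem_range, not_lt] at hi
          simp only [hK i hi]) (hasSum_allmax (p := p))
      have hxval : x = -1 + ((c : ℤ_[p]) - ((p : ℤ_[p]) ^ K - 1)) := by
        refine hsum.unique ?_
        convert key using 2
        rw [Finset.sum_sub_distrib]
        congr 1
        · rw [hc, cast_sum_digits]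
        · rw [← Finset.mul_sum, cast_pred hp.out.one_le, mul_comm, geom_sum_mul]
      have hx2 : x + (m : ℤ_[p]) = (((c : ℤ) - (p : ℤ) ^ K + m : ℤ) : ℤ_[p]) := by
        rw [hxval]; push_cast; ring
      rw [hx2]
      exact hfp_int _
    · -- infinitely many digits differ from p - 1
      have hinf : {i | a i ≠ p - 1}.Infinite := hmax
      obtain ⟨N, hNmem, hNgt⟩ := hinf.exists_gt (N₀ + m.natAbs + 1)
      obtain ⟨M, rfl⟩ : ∃ M, N = M + 1 := ⟨N - 1, by omega⟩
      have haM1 : a (M + 1) ≠ p - 1 := hNmem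
      have haM1pos : a (M + 1) ≠ 0 := hN₀ _ (by omega)
      have haMpos : a M ≠ 0 := hN₀ _ (by omega)
      have hmM : m.natAbs < M := by omega
      have hmlt : m.natAbs < p ^ M :=
        lt_trans hmM (Nat.lt_pow_self (n := M) hp.out.one_lt)
      set c : ℕ := ∑ i ∈ range (M + 1), a i * p ^ i with hc
      have hclb : p ^ M ≤ c := by
        have h1 : a M * p ^ M ≤ c := by
          refine Finset.single_le_sum (f := fun i => a i * p ^ i)
            (fun i _ => Nat.zero_le _) (Finset.self_mem_range_succ M)
        have h2 : p ^ M ≤ a M * p ^ M := Nat.le_mul_of_pos_left _ (Nat.pos_of_ne_zero haMpos)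
        omega
      have hcub : c < p ^ (M + 1) := sum_digits_lt a hbound (M + 1)
      have hple : p ^ M ≤ p ^ (M + 1) := Nat.pow_le_pow_right hp.out.pos (by omega)
      set s : ℤ := (c : ℤ) + m with hsdef
      have hs0 : 0 ≤ s := by omega
      have hs2 : s < 2 * (p ^ (M + 1) : ℕ) := by omega
      obtain ⟨ε, r, hε1, hr, hrlt⟩ : ∃ (ε r : ℕ), ε ≤ 1 ∧
          (r : ℤ) = s - (ε : ℤ) * ((p ^ (M + 1) : ℕ) : ℤ) ∧ r < p ^ (M + 1) := by
        by_cases hcase : s < ((p ^ (M + 1) : ℕ) : ℤ)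
        · exact ⟨0, s.toNat, by norm_num, by omega, by omega⟩
        · exact ⟨1, (s - ((p ^ (M + 1) : ℕ) : ℤ)).toNat, le_refl 1, by omega, by omega⟩
      have hεle : a (M + 1) + ε ≤ p - 1 := by
        have h1 : a (M + 1) ≤ p - 1 := hbound (M + 1)
        have := hp.out.two_le
        omega
      set b : ℕ → ℕ := fun i =>
        if i < M + 1 then dgt p r i else if i = M + 1 then a (M + 1) + ε else a i with hb
      have hbin : ∀ i, i < M + 1 → b i = dgt p r i := by
        intro i hi
        simp only [hb]
        rw [if_pos hi]
      have hbM1 : b (M + 1) = a (M + 1) + ε := by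
        simp [hb]
      have hbout : ∀ i, M + 1 < i → b i = a i := by
        intro i hi
        simp only [hb]
        rw [if_neg (by omega), if_neg (by omega)]
      refine ⟨b, ⟨?_, ?_⟩, Or.inl ?_⟩
      · intro i
        rcases lt_trichotomy i (M + 1) with h1 | h1 | h1
        · rw [hbin i h1]; exact dgt_le r i
        · rw [h1, hbM1]; exact hεle
        · rw [hbout i h1]; exact hbound i
      · -- HasSum
        have key := hasSum_update (fun i => ((a i : ℤ_[p])) * (p : ℤ_[p]) ^ i)
          (fun i => ((b i : ℤ_[p])) * (p : ℤ_[p]) ^ i) x (range (M + 2))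
          (fun i hi => by
            rw [Finset.mem_range, not_lt] at hi
            simp only [hbout i (by omega)]) hsum
        have hval : ∑ i ∈ range (M + 2),
            ((b i : ℤ_[p]) * (p : ℤ_[p]) ^ i - (a i : ℤ_[p]) * (p : ℤ_[p]) ^ i)
            = (m : ℤ_[p]) := by
          rw [Finset.sum_sub_distrib, Finset.sum_range_succ, Finset.sum_range_succ
            (f := fun i => (a i : ℤ_[p]) * (p : ℤ_[p]) ^ i)]
          have eb : ∑ i ∈ range (M + 1), ((b i : ℤ_[p])) * (p : ℤ_[p]) ^ i = (r : ℤ_[p]) := by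
            have hcong : ∀ i ∈ range (M + 1), ((b i : ℤ_[p])) * (p : ℤ_[p]) ^ i
                = ((dgt p r i : ℤ_[p])) * (p : ℤ_[p]) ^ i := by
              intro i hi
              rw [Finset.mem_range] at hi
              rw [hbin i hi]
            rw [Finset.sum_congr rfl hcong, ← cast_sum_digits (dgt p r) (M + 1), sum_dgt,
              Nat.mod_eq_of_lt hrlt]
          have ea : ∑ i ∈ range (M + 1), ((a i : ℤ_[p])) * (p : ℤ_[p]) ^ i = (c : ℤ_[p]) := by
            rw [hc, cast_sum_digits]
          rw [eb, ea, hbM1]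
          have hrZ : ((r : ℤ) : ℤ_[p]) = ((c : ℤ) + m - (ε : ℤ) * ((p ^ (M + 1) : ℕ) : ℤ) : ℤ) := by
            rw [hr, hsdef]
          push_cast at hrZ
          push_cast
          linear_combination hrZ
        rw [hval] at key
        exact key
      · -- finitely many zeros among b
        apply Set.Finite.subset (Set.finite_Iio (M + 1))
        intro i hi
        simp only [Set.mem_setOf_eq] at hi
        rw [Set.mem_Iio]
        by_contra hile
        rw [not_lt] at hile
        rcases eq_or_lt_of_le hile with heq | hlt
        · rw [← heq, hbM1] at hi
          omega
        · rw [hbout i hlt] at hi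
          exact hN₀ i (by omega) hi
  · -- finitely many nonzero digits : x is a natural number
    obtain ⟨K, hK⟩ : ∃ K, ∀ i, K ≤ i → a i = 0 := by
      obtain ⟨K, hK⟩ := hnf.bddAbove
      refine ⟨K + 1, fun i hi => ?_⟩
      by_contra h0
      have := hK (Set.mem_setOf_eq ▸ h0 : i ∈ {i | a i ≠ 0})
      omega
    set c : ℕ := ∑ i ∈ range K, a i * p ^ i with hc
    have hxval : x = (c : ℤ_[p]) := by
      refine hsum.unique ?_
      have h0 : ∀ i ∉ range K, ((a i : ℤ_[p])) * (p : ℤ_[p]) ^ i = 0 := by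
        intro i hi
        rw [Finset.mem_range, not_lt] at hi
        rw [hK i hi, Nat.cast_zero, zero_mul]
      have h := hasSum_sum_of_ne_finset_zero (L := SummationFilter.unconditional ℕ) h0
      rwa [← cast_sum_digits, ← hc] at h
    have hx2 : x + (m : ℤ_[p]) = (((c : ℤ) + m : ℤ) : ℤ_[p]) := by
      rw [hxval]; push_cast; ring
    rw [hx2]
    exact hfp_int _

end FinShift

/-- Shifting by an integer preserves the finiteness property. -/
theorem finiteness_property_int_shift (p : ℕ) [Fact p.Prime] (hp5 : 5 ≤ p)
    (x : ℤ_[p]) (m : ℤ) :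
    HasFinitenessProperty p x ↔ HasFinitenessProperty p (x + (m : ℤ_[p])) := by
  constructor
  · exact fun h => FinShift.hfp_shift x m h
  · intro h
    have h2 := FinShift.hfp_shift (x + (m : ℤ_[p])) (-m) h
    have e : x + (m : ℤ_[p]) + ((-m : ℤ) : ℤ_[p]) = x := by push_cast; ring
    rwa [e] at h2
end

section
/- Let p ≥ 5 be a prime. For every k ≥ 0, p^k(p²−1) divides p^{2(k+1)} − p^{2k}, so the residues of p^{2k} modulo p^k(p²−1) form a compatible sequence defining an element γ ∈ ℨ. The element γ has additive order exactly p² − 1, and the torsion subgroup of ℨ is the cyclic subgroup generated by γ. -/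
/-!
By the Chinese remainder theorem `ℤ/p^k(p²−1) ≅ ℤ/p^k × ℤ/(p²−1)`, and under this splitting
`γ_k = p^{2k}` is `(0, 1)`. The `ℤ/(p²−1)`-coordinate of a compatible sequence is constant. If
`n • x = 0`, then `p^{k + v_p(n)}` divides `n x_{k+v_p(n)}`, so `p^k ∣ x_{k+v_p(n)} ≡ x_k`: the
`ℤ/p^k`-coordinates of a torsion element vanish, and `x = x_0 • γ`.
-/

/-- The inverse limit `ℨ = lim_k ℤ/p^k(p²−1)ℤ`, realized as the additive subgroup of
`Π_{k≥0} ℤ/p^k(p²−1)ℤ` of sequences compatible under the natural reduction maps. -/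
def Zfrak (p : ℕ) : AddSubgroup (∀ k : ℕ, ZMod (p ^ k * (p ^ 2 - 1))) where
  carrier := {α | ∀ k : ℕ,
    ZMod.castHom (mul_dvd_mul (pow_dvd_pow p (Nat.le_succ k)) dvd_rfl)
      (ZMod (p ^ k * (p ^ 2 - 1))) (α (k + 1)) = α k}
  add_mem' := by
    intro a b ha hb k
    simp only [Pi.add_apply, map_add, ha k, hb k]
  zero_mem' := by
    intro k
    simp
  neg_mem' := by
    intro a ha k
    simp only [Pi.neg_apply, map_neg, ha k]

lemma Nat.pow_dvd_of_pow_add_factorization_dvd_mul {p n a k : ℕ} (hp : p.Prime) (hn : n ≠ 0)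
    (h : p ^ (k + n.factorization p) ∣ n * a) : p ^ k ∣ a := by
  rcases eq_or_ne a 0 with rfl | ha
  · exact dvd_zero _
  rw [hp.pow_dvd_iff_le_factorization (mul_ne_zero hn ha), Nat.factorization_mul hn ha] at h
  rw [hp.pow_dvd_iff_le_factorization ha]
  simp only [Finsupp.coe_add, Pi.add_apply] at h
  omega

namespace Zfrak

lemma coprime_pow_sq_sub_one {p : ℕ} (hp : 0 < p) (k : ℕ) : (p ^ k).Coprime (p ^ 2 - 1) := by
  refine Nat.Coprime.pow_left k (Nat.isCoprime_iff_coprime.mp ⟨p, -1, ?_⟩)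
  push_cast [Nat.one_le_pow 2 p hp]
  ring

lemma pow_two_mul_modEq_one {p : ℕ} (hp : 0 < p) (k : ℕ) : p ^ (2 * k) ≡ 1 [MOD p ^ 2 - 1] := by
  simpa [pow_mul] using (Nat.modEq_sub (Nat.one_le_pow 2 p hp)).pow k

lemma pow_mul_sq_sub_one_dvd (p k : ℕ) :
    p ^ k * (p ^ 2 - 1) ∣ p ^ (2 * (k + 1)) - p ^ (2 * k) :=
  ⟨p ^ k, by rw [Nat.mul_sub, Nat.sub_mul]; ring_nf⟩

lemma sq_sub_one_pos {p : ℕ} (hp : 1 < p) : 0 < p ^ 2 - 1 :=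
  Nat.sub_pos_of_lt (Nat.one_lt_pow two_ne_zero hp)

lemma natCast_mem_iff {p : ℕ} (f : ℕ → ℕ) :
    (fun k => (f k : ZMod (p ^ k * (p ^ 2 - 1)))) ∈ Zfrak p ↔
      ∀ k, f (k + 1) ≡ f k [MOD p ^ k * (p ^ 2 - 1)] := by
  refine forall_congr' fun k => ?_
  rw [map_natCast, ZMod.natCast_eq_natCast_iff]

def gamma (p : ℕ) : ∀ k : ℕ, ZMod (p ^ k * (p ^ 2 - 1)) :=
  fun k => ((p ^ (2 * k) : ℕ) : ZMod (p ^ k * (p ^ 2 - 1)))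

lemma gamma_mem {p : ℕ} (hp : 0 < p) : gamma p ∈ Zfrak p :=
  (natCast_mem_iff _).2 fun k =>
    ((Nat.modEq_iff_dvd' (Nat.pow_le_pow_right hp (by omega))).2
      (pow_mul_sq_sub_one_dvd p k)).symm

lemma sq_sub_one_nsmul_gamma (p : ℕ) : (p ^ 2 - 1) • gamma p = 0 := by
  funext k
  rw [Pi.smul_apply, Pi.zero_apply, gamma, nsmul_eq_mul, ← Nat.cast_mul,
    ZMod.natCast_eq_zero_iff, mul_comm (p ^ 2 - 1)]
  exact mul_dvd_mul (pow_dvd_pow p (by omega)) dvd_rfl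

lemma addOrderOf_gamma (p : ℕ) : addOrderOf (gamma p) = p ^ 2 - 1 := by
  refine dvd_antisymm (addOrderOf_dvd_of_nsmul_eq_zero (sq_sub_one_nsmul_gamma p)) ?_
  have h := addOrderOf_map_dvd (Pi.evalAddMonoidHom _ 0) (gamma p)
  rwa [Pi.evalAddMonoidHom_apply, gamma, mul_zero, pow_zero, Nat.cast_one,
    ZMod.addOrderOf_one, one_mul] at h

section Prime

variable {p : ℕ} [Fact p.Prime]

instance neZero_pow_mul_sq_sub_one (k : ℕ) : NeZero (p ^ k * (p ^ 2 - 1)) :=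
  ⟨Nat.mul_ne_zero (pow_ne_zero k (Fact.out : p.Prime).ne_zero)
    (sq_sub_one_pos (Fact.out : p.Prime).one_lt).ne'⟩

lemma val_succ_modEq {x : ∀ k : ℕ, ZMod (p ^ k * (p ^ 2 - 1))} (hx : x ∈ Zfrak p) (k : ℕ) :
    (x (k + 1)).val ≡ (x k).val [MOD p ^ k * (p ^ 2 - 1)] := by
  have h := hx k
  rw [← ZMod.natCast_zmod_val (x (k + 1)), map_natCast, ← ZMod.natCast_zmod_val (x k)] at h
  exact (ZMod.natCast_eq_natCast_iff _ _ _).1 h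

lemma val_modEq_of_le {x : ∀ k : ℕ, ZMod (p ^ k * (p ^ 2 - 1))} (hx : x ∈ Zfrak p)
    {k l : ℕ} (hkl : k ≤ l) : (x l).val ≡ (x k).val [MOD p ^ k * (p ^ 2 - 1)] := by
  induction l, hkl using Nat.le_induction with
  | base => rfl
  | succ l hkl ih =>
    exact ((val_succ_modEq hx l).of_dvd
      (mul_dvd_mul (pow_dvd_pow p hkl) dvd_rfl)).trans ih

lemma pow_dvd_val_of_nsmul_eq_zero {x : ∀ k : ℕ, ZMod (p ^ k * (p ^ 2 - 1))}
    (hx : x ∈ Zfrak p) {n : ℕ} (hn : n ≠ 0) (hnx : n • x = 0) (k : ℕ) :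
    p ^ k ∣ (x k).val := by
  set l := k + n.factorization p
  have hl : p ^ l * (p ^ 2 - 1) ∣ n * (x l).val := by
    have h := congrFun hnx l
    rwa [Pi.smul_apply, Pi.zero_apply, ← ZMod.natCast_zmod_val (x l), nsmul_eq_mul,
      ← Nat.cast_mul, ZMod.natCast_eq_zero_iff] at h
  have hpl : p ^ k ∣ (x l).val :=
    Nat.pow_dvd_of_pow_add_factorization_dvd_mul Fact.out hn ((dvd_mul_right _ _).trans hl)
  exact (((val_modEq_of_le hx (Nat.le_add_right _ _)).of_dvd
    (dvd_mul_right _ _)).dvd_iff dvd_rfl).1 hpl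

lemma eq_val_zero_zsmul_gamma_of_nsmul_eq_zero {x : ∀ k : ℕ, ZMod (p ^ k * (p ^ 2 - 1))}
    (hx : x ∈ Zfrak p) {n : ℕ} (hn : n ≠ 0) (hnx : n • x = 0) :
    x = ((x 0).val : ℤ) • gamma p := by
  have hp : 0 < p := (Fact.out : p.Prime).pos
  funext k
  rw [Pi.smul_apply, natCast_zsmul, gamma, nsmul_eq_mul, ← Nat.cast_mul,
    ← ZMod.natCast_zmod_val (x k), ZMod.natCast_eq_natCast_iff]
  refine (Nat.modEq_and_modEq_iff_modEq_mul (coprime_pow_sq_sub_one hp k)).1 ⟨?_, ?_⟩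
  · exact (Nat.modEq_zero_iff_dvd.2 (pow_dvd_val_of_nsmul_eq_zero hx hn hnx k)).trans
      (Nat.modEq_zero_iff_dvd.2 (Dvd.dvd.mul_left (pow_dvd_pow p (by omega)) _)).symm
  · calc (x k).val ≡ (x 0).val [MOD p ^ 2 - 1] :=
          (val_modEq_of_le hx (Nat.zero_le k)).of_dvd (by simp)
      _ ≡ (x 0).val * p ^ (2 * k) [MOD p ^ 2 - 1] := by
          simpa using ((pow_two_mul_modEq_one hp k).mul_left (x 0).val).symm

end Prime

end Zfrak

theorem gamma_generates_torsion_general (p : ℕ) [Fact p.Prime] :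
    (∀ k : ℕ, p ^ k * (p ^ 2 - 1) ∣ p ^ (2 * (k + 1)) - p ^ (2 * k)) ∧
    (fun k : ℕ => ((p ^ (2 * k) : ℕ) : ZMod (p ^ k * (p ^ 2 - 1)))) ∈ Zfrak p ∧
    addOrderOf (fun k : ℕ => ((p ^ (2 * k) : ℕ) : ZMod (p ^ k * (p ^ 2 - 1)))) =
      p ^ 2 - 1 ∧
    (∀ x ∈ Zfrak p, (∃ n : ℕ, 0 < n ∧ n • x = 0) ↔
      ∃ m : ℤ, x = m • (fun k : ℕ => ((p ^ (2 * k) : ℕ) : ZMod (p ^ k * (p ^ 2 - 1))))) := by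
  have hp : p.Prime := Fact.out
  show _ ∧ Zfrak.gamma p ∈ Zfrak p ∧ addOrderOf (Zfrak.gamma p) = _ ∧
    ∀ x ∈ Zfrak p, _ ↔ ∃ m : ℤ, x = m • Zfrak.gamma p
  refine ⟨Zfrak.pow_mul_sq_sub_one_dvd p, Zfrak.gamma_mem hp.pos, Zfrak.addOrderOf_gamma p,
    fun x hx => ⟨?_, ?_⟩⟩
  · rintro ⟨n, hn, hnx⟩
    exact ⟨_, Zfrak.eq_val_zero_zsmul_gamma_of_nsmul_eq_zero hx hn.ne' hnx⟩
  · rintro ⟨m, rfl⟩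
    refine ⟨p ^ 2 - 1, Zfrak.sq_sub_one_pos hp.one_lt, ?_⟩
    rw [smul_comm, Zfrak.sq_sub_one_nsmul_gamma, smul_zero]

/-- The element `γ = lim_k p^{2k} ∈ ℨ`: `p^k(p²−1) ∣ p^{2(k+1)} − p^{2k}`, so the residues
of `p^{2k}` define an element `γ ∈ ℨ`.  It has additive order exactly `p² − 1`, and the
torsion subgroup of `ℨ` is the cyclic subgroup generated by `γ`. -/
theorem gamma_generates_torsion (p : ℕ) [Fact p.Prime] (hp5 : 5 ≤ p) :
    (∀ k : ℕ, p ^ k * (p ^ 2 - 1) ∣ p ^ (2 * (k + 1)) - p ^ (2 * k)) ∧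
    (fun k : ℕ => ((p ^ (2 * k) : ℕ) : ZMod (p ^ k * (p ^ 2 - 1)))) ∈ Zfrak p ∧
    addOrderOf (fun k : ℕ => ((p ^ (2 * k) : ℕ) : ZMod (p ^ k * (p ^ 2 - 1)))) =
      p ^ 2 - 1 ∧
    (∀ x ∈ Zfrak p, (∃ n : ℕ, 0 < n ∧ n • x = 0) ↔
      ∃ m : ℤ, x = m • (fun k : ℕ => ((p ^ (2 * k) : ℕ) : ZMod (p ^ k * (p ^ 2 - 1))))) :=
  gamma_generates_torsion_general p
end

section
/- Let p ≥ 5 be a prime and let γ ∈ ℨ be the element whose k-th component is the class of p^{2k} modulo p^k(p²−1). Then the ℨ-expansion of γ has coefficients a_0 = 1, a_i = 1 for every odd i ≥ 1, and a_i = 0 for every even i ≥ 2. In particular the coefficient sequence (a_i)_{i≥1} has infinitely many zero entries and infinitely many nonzero entries. -/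
/-!
Modulo `p^k (p² - 1)` the power `p^{2k}` is congruent to `p^{2m}` for `m = ⌈k/2⌉`, since
`p^k ∣ p^{2m}` and `p² - 1 ∣ p^{2(k-m)} - 1`. On the other hand, the proposed expansion sums to
`1 + (p² - 1)(1 + p² + ⋯ + p^{2(m-1)}) = p^{2m}` exactly, by the geometric series.
-/

open Finset

section CommRing

variable {R : Type*} [CommRing R]

theorem sum_range_ite_even_pow (x : R) (k : ℕ) :
    ∑ i ∈ range k, (if Even i then x ^ i else 0) = ∑ j ∈ range ((k + 1) / 2), (x ^ 2) ^ j := by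
  induction k with
  | zero => simp
  | succ k ih =>
    rw [sum_range_succ, ih]
    rcases Nat.even_or_odd' k with ⟨n, rfl | rfl⟩
    · rw [if_pos (even_two_mul n), show (2 * n + 1 + 1) / 2 = n + 1 by omega,
        show (2 * n + 1) / 2 = n by omega, sum_range_succ, ← pow_mul]
    · rw [if_neg (Nat.not_even_iff_odd.mpr (odd_two_mul_add_one n)), add_zero,
        show (2 * n + 1 + 1 + 1) / 2 = (2 * n + 1 + 1) / 2 by omega]

theorem one_add_sq_sub_one_mul_sum_range_ite_even_pow (x : R) (k : ℕ) :
    1 + (x ^ 2 - 1) * ∑ i ∈ range k, (if Even i then x ^ i else 0) = x ^ (2 * ((k + 1) / 2)) := by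
  rw [sum_range_ite_even_pow, mul_geom_sum, pow_mul]
  ring

theorem pow_mul_sq_sub_one_dvd_pow_sub_pow (x : R) {k m : ℕ} (hkm : k ≤ 2 * m) (hmk : m ≤ k) :
    x ^ k * (x ^ 2 - 1) ∣ x ^ (2 * k) - x ^ (2 * m) := by
  have hsplit : x ^ (2 * k) - x ^ (2 * m) = x ^ (2 * m) * ((x ^ 2) ^ (k - m) - 1) := by
    rw [mul_sub, mul_one, ← pow_mul, ← pow_add, show 2 * m + 2 * (k - m) = 2 * k by omega]
  rw [hsplit]
  exact mul_dvd_mul (pow_dvd_pow x hkm) (by simpa using sub_dvd_pow_sub_pow (x ^ 2) 1 (k - m))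

end CommRing

theorem gamma_expansion_general (p : ℕ) (hp5 : 5 ≤ p)
    (a : ℕ → ℕ) (ha : a = fun i => if i = 0 then 1 else if Odd i then 1 else 0) :
    (∀ k : ℕ, ((p ^ (2 * k) : ℕ) : ZMod (p ^ k * (p ^ 2 - 1))) =
      ((a 0 + (p ^ 2 - 1) * ∑ i ∈ Finset.range k, a (i + 1) * p ^ i : ℕ) :
        ZMod (p ^ k * (p ^ 2 - 1)))) ∧
    (a 0 = 1) ∧ (∀ i : ℕ, 1 ≤ i → Odd i → a i = 1) ∧
    (∀ i : ℕ, 2 ≤ i → Even i → a i = 0) ∧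
    {i : ℕ | 1 ≤ i ∧ a i = 0}.Infinite ∧ {i : ℕ | 1 ≤ i ∧ a i ≠ 0}.Infinite := by
  have ha0 : a 0 = 1 := by simp [ha]
  have ha_odd (i : ℕ) (hi : Odd i) : a i = 1 := by simp [ha, hi, hi.pos.ne']
  have ha_even (i : ℕ) (hi : 1 ≤ i) (he : Even i) : a i = 0 := by
    simp [ha, Nat.not_odd_iff_even.mpr he, Nat.one_le_iff_ne_zero.mp hi]
  have ha_succ (i : ℕ) : a (i + 1) = if Even i then 1 else 0 := by
    split_ifs with h
    exacts [ha_odd _ h.add_one, ha_even _ (by omega) (Nat.even_add_one.mpr h)]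
  refine ⟨fun k => ?_, ha0, fun i _ => ha_odd i, fun i hi => ha_even i (by omega), ?_, ?_⟩
  · have hsq : 1 ≤ p ^ 2 := Nat.one_le_pow _ _ (by omega)
    rw [← Int.cast_natCast, ← Int.cast_natCast (R := ZMod _), ZMod.intCast_eq_intCast_iff_dvd_sub]
    simp only [ha0, ha_succ]
    push_cast [Nat.cast_sub hsq, ite_mul, one_mul, zero_mul]
    rw [one_add_sq_sub_one_mul_sum_range_ite_even_pow, dvd_sub_comm]
    exact pow_mul_sq_sub_one_dvd_pow_sub_pow _ (by omega) (by omega)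
  · exact Set.infinite_of_injective_forall_mem (f := fun n => 2 * n + 2)
      (fun m n h => by simpa using h) fun n => ⟨by omega, ha_even _ (by omega) ⟨n + 1, by ring⟩⟩
  · exact Set.infinite_of_injective_forall_mem (f := fun n => 2 * n + 1)
      (fun m n h => by simpa using h) fun n =>
        ⟨by omega, by rw [ha_odd _ (odd_two_mul_add_one n)]; exact one_ne_zero⟩

/-- The ℨ-expansion of `γ = lim_k p^{2k}` has coefficients `a₀ = 1`, `aᵢ = 1` for odd
`i ≥ 1`, and `aᵢ = 0` for even `i ≥ 2`; in particular the coefficient sequence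
`(aᵢ)_{i≥1}` has infinitely many zero and infinitely many nonzero entries. -/
theorem gamma_expansion (p : ℕ) [Fact p.Prime] (hp5 : 5 ≤ p)
    (a : ℕ → ℕ) (ha : a = fun i => if i = 0 then 1 else if Odd i then 1 else 0) :
    (∀ k : ℕ, ((p ^ (2 * k) : ℕ) : ZMod (p ^ k * (p ^ 2 - 1))) =
      ((a 0 + (p ^ 2 - 1) * ∑ i ∈ Finset.range k, a (i + 1) * p ^ i : ℕ) :
        ZMod (p ^ k * (p ^ 2 - 1)))) ∧
    (a 0 = 1) ∧ (∀ i : ℕ, 1 ≤ i → Odd i → a i = 1) ∧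
    (∀ i : ℕ, 2 ≤ i → Even i → a i = 0) ∧
    {i : ℕ | 1 ≤ i ∧ a i = 0}.Infinite ∧ {i : ℕ | 1 ≤ i ∧ a i ≠ 0}.Infinite :=
  gamma_expansion_general p hp5 a ha
end
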